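/- If A is a thick category of cubes not containing any symmetry map σᵢ, then every map of A lies in Ŝ; that is, Ŝ is the greatest thick category of cubes (for inclusion) not containing the symmetry maps. Key step: if φ ∈ A and δ ∈ □ with φ∘δ injective, writing φ∘δ = δ'∘φ' with δ' ∈ □ and φ' a cotransverse endomap in A, injectivity forces φ' = id, so φ∘δ = δ' ∈ □. -/
import Mathlib


open scoped ENNReal

open Classical in
noncomputable def dCube {n : ℕ} (x y : Fin n → Bool) : ℝ≥0∞ :=
  if x ≤ y then ((Finset.univ.filter fun i => x i ≠ y i).card : ℝ≥0∞) else ⊤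

/-- Maps between binary cubes. -/
abbrev CubeMap (m n : ℕ) := (Fin m → Bool) → (Fin n → Bool)

/-- Cotransverse maps: strictly increasing poset maps preserving `d̄₁`-distance `1`. -/
def Cotransverse {m n : ℕ} (f : CubeMap m n) : Prop :=
  StrictMono f ∧ ∀ x y, dCube x y = 1 → dCube (f x) (f y) = 1

/-- Membership in the box category `□`: composites of coface maps. -/
inductive IsBox : ∀ {m n : ℕ}, CubeMap m n → Prop
  | id (n : ℕ) : IsBox (@id (Fin n → Bool))
  | coface {n : ℕ} (i : Fin (n + 1)) (a : Bool) :
      IsBox (fun x : Fin n → Bool => (i.insertNth a x : Fin (n + 1) → Bool))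
  | comp {m n p : ℕ} {f : CubeMap m n} {g : CubeMap n p} :
      IsBox f → IsBox g → IsBox (g ∘ f)

/-- The symmetry map swapping coordinates `i` and `i+1`. -/
def symMap {n : ℕ} (i : Fin n) : CubeMap (n + 1) (n + 1) :=
  fun x => x ∘ (Equiv.swap i.castSucc i.succ)

/-- Membership in the symmetric box category `□_S`:
composites of coface maps and symmetry maps. -/
inductive IsBoxS : ∀ {m n : ℕ}, CubeMap m n → Prop
  | id (n : ℕ) : IsBoxS (@id (Fin n → Bool))
  | coface {n : ℕ} (i : Fin (n + 1)) (a : Bool) :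
      IsBoxS (fun x : Fin n → Bool => (i.insertNth a x : Fin (n + 1) → Bool))
  | sym {n : ℕ} (i : Fin n) : IsBoxS (symMap i)
  | comp {m n p : ℕ} {f : CubeMap m n} {g : CubeMap n p} :
      IsBoxS f → IsBoxS g → IsBoxS (g ∘ f)

/-- Composites of symmetry maps. -/
inductive IsSymComp : ∀ {n : ℕ}, CubeMap n n → Prop
  | id (n : ℕ) : IsSymComp (@id (Fin n → Bool))
  | sym {n : ℕ} (i : Fin n) : IsSymComp (symMap i)
  | comp {n : ℕ} {f g : CubeMap n n} :
      IsSymComp f → IsSymComp g → IsSymComp (g ∘ f)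

/-- Membership in the transverse box category `□̂`: cotransverse maps `φ` such that
`φ ∘ δ ∈ □` for every `δ ∈ □` with `φ ∘ δ` injective. -/
def InHatBox {m n : ℕ} (f : CubeMap m n) : Prop :=
  Cotransverse f ∧ ∀ (p : ℕ) (δ : CubeMap p m), IsBox δ →
    Function.Injective (f ∘ δ) → IsBox (f ∘ δ)

/-- A (thick) category of cubes: a subcategory `A` with `□ ⊆ A ⊆ □̂_S` (all maps
cotransverse), closed under composition, such that in the unique factorization of any
of its maps as a box map following a cotransverse endomap, the endomap lies in `A`. -/
structure ThickCubeCat (A : ∀ m n : ℕ, CubeMap m n → Prop) : Prop where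
  box_subset : ∀ {m n : ℕ} (f : CubeMap m n), IsBox f → A m n f
  cotransverse : ∀ {m n : ℕ} (f : CubeMap m n), A m n f → Cotransverse f
  comp : ∀ {m n p : ℕ} (f : CubeMap m n) (g : CubeMap n p),
    A m n f → A n p g → A m p (g ∘ f)
  thick : ∀ {m n : ℕ} (f : CubeMap m n) (ψ : CubeMap m m) (φ : CubeMap m n),
    A m n f → Cotransverse ψ → IsBox φ → f = φ ∘ ψ → A m m ψ


lemma dCube_eq_one_iff {n : ℕ} {x y : Fin n → Bool} :
    dCube x y = 1 ↔ x ≤ y ∧ (Finset.univ.filter fun i => x i ≠ y i).card = 1 := by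
  unfold dCube
  split
  · rename_i h
    simp [h, Nat.cast_eq_one]
  · rename_i h
    simp [h]

lemma bool_le_ne : ∀ {a b : Bool}, a ≤ b → a ≠ b → a = false ∧ b = true := by decide

lemma strictMono_fin_endo_eq_id {n : ℕ} {f : Fin n → Fin n} (hf : StrictMono f) : f = id := by
  have hr : Set.range f = Set.range (id : Fin n → Fin n) := by
    have hsurj : Function.Surjective f :=
      Finite.surjective_of_injective hf.injective
    rw [Set.range_eq_univ.2 hsurj, Set.range_id]
  haveI : WellFoundedLT (Fin n) := inferInstance
  exact (StrictMono.range_inj hf strictMono_id).1 hr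


/-- The insertion map along `e` with default values `b`. -/
noncomputable def insMap {p n : ℕ} (e : Fin p → Fin n) (b : Fin n → Bool) : CubeMap p n :=
  fun x => Function.extend e x b

lemma isBox_insMap : ∀ (n p : ℕ) (e : Fin p → Fin n) (b : Fin n → Bool),
    StrictMono e → IsBox (insMap e b) := by
  intro n
  induction n with
  | zero =>
    intro p e b he
    have hp : p = 0 := by
      by_contra h
      exact (e ⟨0, Nat.pos_of_ne_zero h⟩).elim0
    subst hp
    have : insMap e b = id := by
      funext x j; exact j.elim0
    rw [this]; exact IsBox.id 0
  | succ n ih =>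
    intro p e b he
    rcases lt_or_ge p (n+1) with hp | hp
    · -- there is a coordinate not in the range of e
      have hns : ¬ Function.Surjective e := by
        intro hs
        have := Fintype.card_le_of_surjective e hs
        simp only [Fintype.card_fin] at this
        omega
      rw [Function.Surjective] at hns
      push_neg at hns
      obtain ⟨j₀, hj₀⟩ := hns
      have hne : ∀ i, e i ≠ j₀ := fun i h => hj₀ i h
      choose e' he' using fun i => Fin.exists_succAbove_eq (hne i)
      have he'mono : StrictMono e' := by
        intro a b' hab
        have h1 := he hab
        rw [← he' a, ← he' b'] at h1
        exact Fin.succAbove_lt_succAbove_iff.1 h1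
      have key : insMap e b =
          (fun x : Fin n → Bool => (j₀.insertNth (b j₀) x : Fin (n+1) → Bool)) ∘
            insMap e' (b ∘ j₀.succAbove) := by
        funext x j
        rcases eq_or_ne j j₀ with rfl | hj
        · show Function.extend e x b j = _
          rw [Function.extend_apply' x b j (not_exists.2 hne)]
          simp [insMap]
        · obtain ⟨k, rfl⟩ := Fin.exists_succAbove_eq hj
          show Function.extend e x b _ = _
          simp only [Function.comp_apply, Fin.insertNth_apply_succAbove]
          by_cases hk : ∃ i, e' i = k
          · obtain ⟨i, rfl⟩ := hk
            rw [he' i, he.injective.extend_apply]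
            show _ = Function.extend e' x _ (e' i)
            rw [he'mono.injective.extend_apply]
          · have hk2 : ¬ ∃ i, e i = j₀.succAbove k := by
              rintro ⟨i, hi⟩
              exact hk ⟨i, Fin.succAbove_right_injective (by rw [he' i, hi])⟩
            rw [Function.extend_apply' x b _ hk2]
            show _ = Function.extend e' x _ k
            rw [Function.extend_apply' x _ k hk]
            rfl
      rw [key]
      exact IsBox.comp (ih p e' _ he'mono) (IsBox.coface j₀ (b j₀))
    · -- p = n+1, e = id
      have hple : p ≤ n + 1 := by
        have := Fintype.card_le_of_injective e he.injective
        simpa using this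
      have hpn : p = n + 1 := le_antisymm hple hp
      subst hpn
      have heid : e = id := strictMono_fin_endo_eq_id he
      subst heid
      have : insMap (id : Fin (n+1) → Fin (n+1)) b = id := by
        funext x j
        exact Function.injective_id.extend_apply x b j
      rw [this]
      exact IsBox.id (n+1)

lemma bool_le_false : ∀ {a : Bool}, a ≤ false → a = false := by decide

lemma bot_apply' {p : ℕ} (i : Fin p) : (⊥ : Fin p → Bool) i = false := rfl
lemma top_apply' {p : ℕ} (i : Fin p) : (⊤ : Fin p → Bool) i = true := rfl

lemma diff_card_bot_top {p n : ℕ} (g : CubeMap p n) (hg : Cotransverse g) :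
    (Finset.univ.filter fun j => g ⊥ j ≠ g ⊤ j).card = p := by
  set x : ℕ → (Fin p → Bool) := fun k i => decide ((i : ℕ) < k) with hx
  have hx0 : x 0 = ⊥ := by funext i; simp [hx]
  have hxp : x p = ⊤ := by funext i; simp [hx, i.isLt]
  have hstep : ∀ k, k < p → dCube (x k) (x (k+1)) = 1 := by
    intro k hk
    rw [dCube_eq_one_iff]
    constructor
    · intro i
      simp only [hx]
      by_cases h : (i : ℕ) < k
      · simp [h, Nat.lt_succ_of_lt h]
      · simp [h]
    · have : (Finset.univ.filter fun i => x k i ≠ x (k+1) i) = {(⟨k, hk⟩ : Fin p)} := by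
        ext i
        simp only [Finset.mem_filter, Finset.mem_univ, true_and, Finset.mem_singleton, hx]
        constructor
        · intro h
          have hik : (i : ℕ) = k := by
            by_cases h1 : (i : ℕ) < k
            · simp [h1, Nat.lt_succ_of_lt h1] at h
            · by_cases h2 : (i : ℕ) < k + 1
              · omega
              · simp [h1, h2] at h
          exact Fin.ext (by simp only [Fin.val_mk]; omega)
        · rintro rfl
          simp
      rw [this, Finset.card_singleton]
  have aux : ∀ k, k ≤ p → (Finset.univ.filter fun j => g ⊥ j ≠ g (x k) j).card = 0 + k := by
    intro k
    induction k with
    | zero => intro _; rw [hx0]; simp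
    | succ k ihk =>
      intro hk1
      have hk : k < p := hk1
      have hd := hg.2 _ _ (hstep k hk)
      rw [dCube_eq_one_iff] at hd
      obtain ⟨hle, hcard⟩ := hd
      obtain ⟨js, hjs⟩ := Finset.card_eq_one.1 hcard
      have hdiff : ∀ j, g (x k) j ≠ g (x (k+1)) j ↔ j = js := by
        intro j
        have := Finset.ext_iff.1 hjs j
        simpa using this
      have hbot_le : ∀ j, g ⊥ j ≤ g (x k) j := fun j => hg.1.monotone (bot_le) j
      have hjs_vals : g (x k) js = false ∧ g (x (k+1)) js = true :=
        bool_le_ne (hle js) ((hdiff js).2 rfl)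
      have hbot_js : g ⊥ js = false :=
        bool_le_false (by rw [← hjs_vals.1]; exact hbot_le js)
      have hset : (Finset.univ.filter fun j => g ⊥ j ≠ g (x (k+1)) j) =
          insert js (Finset.univ.filter fun j => g ⊥ j ≠ g (x k) j) := by
        ext j
        simp only [Finset.mem_filter, Finset.mem_univ, true_and, Finset.mem_insert]
        rcases eq_or_ne j js with rfl | hj
        · simp [hbot_js, hjs_vals.2]
        · have heq : g (x k) j = g (x (k+1)) j := by
            by_contra hc
            exact hj ((hdiff j).1 hc)
          rw [heq]
          simp [hj]
      rw [hset, Finset.card_insert_of_notMem (by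
        simp only [Finset.mem_filter, Finset.mem_univ, true_and, not_not]
        rw [hbot_js, hjs_vals.1]), ihk (Nat.le_of_lt hk)]
      omega
  have := aux p le_rfl
  rw [hxp] at this
  simpa using this

lemma cotransverse_factor {p n : ℕ} (g : CubeMap p n) (hg : Cotransverse g) :
    ∃ (e : Fin p → Fin n) (ψ : CubeMap p p), StrictMono e ∧ Cotransverse ψ ∧
      g = insMap e (g ⊥) ∘ ψ := by
  classical
  set S : Finset (Fin n) := Finset.univ.filter fun j => g ⊥ j ≠ g ⊤ j with hS
  have hScard : S.card = p := diff_card_bot_top g hg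
  set E := S.orderIsoOfFin hScard with hE
  set e : Fin p → Fin n := fun i => (E i : Fin n) with he
  have hemono : StrictMono e := by
    intro a b hab
    exact Subtype.coe_lt_coe.2 (E.lt_iff_lt.2 hab)
  have hmemS : ∀ i, e i ∈ S := fun i => (E i).2
  have hsurjS : ∀ j, j ∈ S → ∃ i, e i = j := by
    intro j hj
    refine ⟨E.symm ⟨j, hj⟩, ?_⟩
    show ((E (E.symm ⟨j, hj⟩) : Fin n)) = j
    rw [E.apply_symm_apply]
  have hconst : ∀ (x : Fin p → Bool) j, j ∉ S → g x j = g ⊥ j := by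
    intro x j hj
    simp only [hS, Finset.mem_filter, Finset.mem_univ, true_and, not_not] at hj
    have h1 : g ⊥ j ≤ g x j := hg.1.monotone bot_le j
    have h2 : g x j ≤ g ⊤ j := hg.1.monotone le_top j
    rw [← hj] at h2
    exact le_antisymm h2 h1
  set ψ : CubeMap p p := fun x i => g x (e i) with hψ
  have hfact : g = insMap e (g ⊥) ∘ ψ := by
    funext x j
    by_cases hj : ∃ i, e i = j
    · obtain ⟨i, rfl⟩ := hj
      show g x (e i) = Function.extend e (ψ x) (g ⊥) (e i)
      rw [hemono.injective.extend_apply]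
    · show g x j = Function.extend e (ψ x) (g ⊥) j
      rw [Function.extend_apply' _ _ _ hj]
      exact hconst x j (fun hmem => hj (hsurjS j hmem))
  refine ⟨e, ψ, hemono, ⟨?_, ?_⟩, hfact⟩
  · -- StrictMono ψ
    intro x y hxy
    have h1 : g x < g y := hg.1 hxy
    constructor
    · intro i; exact h1.le (e i)
    · intro hc
      apply absurd (le_antisymm h1.le ?_) (ne_of_lt h1)
      intro j
      by_cases hj : j ∈ S
      · obtain ⟨i, rfl⟩ := hsurjS j hj
        exact hc i
      · rw [hconst x j hj, hconst y j hj]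
  · -- distance preservation
    intro x y hxy
    have hd := hg.2 x y hxy
    rw [dCube_eq_one_iff] at hd ⊢
    obtain ⟨hle, hcard⟩ := hd
    obtain ⟨js, hjs⟩ := Finset.card_eq_one.1 hcard
    have hdiff : ∀ j, g x j ≠ g y j ↔ j = js := by
      intro j
      have := Finset.ext_iff.1 hjs j
      simpa using this
    have hjsS : js ∈ S := by
      by_contra hjs'
      exact (hdiff js).2 rfl ((hconst x js hjs').trans (hconst y js hjs').symm)
    obtain ⟨i₀, hi₀⟩ := hsurjS js hjsS
    refine ⟨fun i => hle (e i), ?_⟩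
    have : (Finset.univ.filter fun i => ψ x i ≠ ψ y i) = {i₀} := by
      ext i
      simp only [Finset.mem_filter, Finset.mem_univ, true_and, Finset.mem_singleton, hψ]
      rw [hdiff (e i), ← hi₀]
      exact ⟨fun h => hemono.injective h, fun h => by rw [h]⟩
    rw [this, Finset.card_singleton]

lemma bool_true_le : ∀ {a : Bool}, true ≤ a → a = true := by decide

/-- weight of a vertex -/
noncomputable def wt {m : ℕ} (x : Fin m → Bool) : ℕ :=
  (Finset.univ.filter fun i => x i = true).card

lemma wt_succ_of_dist_one {m : ℕ} {a b : Fin m → Bool} (hab : a ≤ b)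
    (h1 : (Finset.univ.filter fun i => a i ≠ b i).card = 1) : wt b = wt a + 1 := by
  classical
  obtain ⟨j₀, hjs⟩ := Finset.card_eq_one.1 h1
  have hdiff : ∀ j, a j ≠ b j ↔ j = j₀ := by
    intro j
    have := Finset.ext_iff.1 hjs j
    simpa using this
  have hv := bool_le_ne (hab j₀) ((hdiff j₀).2 rfl)
  have hset : (Finset.univ.filter fun i => b i = true) =
      insert j₀ (Finset.univ.filter fun i => a i = true) := by
    ext j
    simp only [Finset.mem_filter, Finset.mem_univ, true_and, Finset.mem_insert]
    rcases eq_or_ne j j₀ with rfl | hj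
    · simp [hv.2]
    · have heq : a j = b j := by
        by_contra hc
        exact hj ((hdiff j).1 hc)
      rw [heq]
      simp [hj]
  rw [wt, hset, Finset.card_insert_of_notMem (by simp [hv.1]), wt]

/-- unit vector -/
def unitV {m : ℕ} (i : Fin m) : Fin m → Bool := fun j => decide (j = i)

lemma dCube_bot_unitV {m : ℕ} (i : Fin m) : dCube (⊥ : Fin m → Bool) (unitV i) = 1 := by
  rw [dCube_eq_one_iff]
  refine ⟨bot_le, ?_⟩
  have : (Finset.univ.filter fun j => (⊥ : Fin m → Bool) j ≠ unitV i j) = {i} := by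
    ext j
    simp [unitV, bot_apply']
  rw [this, Finset.card_singleton]

lemma eq_unitV_of_dCube_bot {m : ℕ} {y : Fin m → Bool}
    (h : dCube (⊥ : Fin m → Bool) y = 1) : ∃ i, y = unitV i := by
  rw [dCube_eq_one_iff] at h
  obtain ⟨-, hcard⟩ := h
  obtain ⟨i, hi⟩ := Finset.card_eq_one.1 hcard
  refine ⟨i, funext fun j => ?_⟩
  have := Finset.ext_iff.1 hi j
  simp only [Finset.mem_filter, Finset.mem_univ, true_and, Finset.mem_singleton,
    bot_apply'] at this
  rcases eq_or_ne j i with rfl | hj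
  · have h2 : false ≠ y j := this.2 rfl
    have h3 : y j = true := by
      cases hy : y j
      · exact absurd hy.symm h2
      · rfl
    simp [unitV, h3]
  · have h2 : ¬ (false ≠ y j) := fun hc => hj (this.1 hc)
    simp only [ne_eq, not_not] at h2
    rw [← h2]
    simp [unitV, hj]

lemma cotransverse_inj_endo_perm {m : ℕ} (ψ : CubeMap m m) (hψ : Cotransverse ψ)
    (hinj : Function.Injective ψ) :
    ∃ σ : Equiv.Perm (Fin m), ∀ x j, ψ x j = x (σ.symm j) := by
  classical
  have hbij : Function.Bijective ψ := Finite.injective_iff_bijective.1 hinj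
  have hψbot : ψ ⊥ = ⊥ := by
    obtain ⟨z, hz⟩ := hbij.2 ⊥
    have h1 : ψ ⊥ ≤ ψ z := hψ.1.monotone bot_le
    rw [hz] at h1
    exact le_antisymm h1 bot_le
  have hunit : ∀ i : Fin m, ∃ i', ψ (unitV i) = unitV i' := by
    intro i
    have := hψ.2 _ _ (dCube_bot_unitV i)
    rw [hψbot] at this
    exact eq_unitV_of_dCube_bot this
  choose σ0 hσ0 using hunit
  have hunitinj : Function.Injective (unitV (m := m)) := by
    intro a b hab
    have := congrFun hab a
    simp only [unitV, decide_eq_decide] at this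
    exact this.1 trivial
  have hσ0inj : Function.Injective σ0 := by
    intro a b hab
    apply hunitinj
    apply hinj
    rw [hσ0 a, hσ0 b, hab]
  have hσ0bij : Function.Bijective σ0 := Finite.injective_iff_bijective.1 hσ0inj
  set σ : Equiv.Perm (Fin m) := Equiv.ofBijective σ0 hσ0bij with hσdef
  have hσapp : ∀ i, σ i = σ0 i := fun i => rfl
  -- claim A
  have claimA : ∀ (x : Fin m → Bool) i, x i = true → ψ x (σ0 i) = true := by
    intro x i hx
    have hle : unitV i ≤ x := by
      intro j
      rcases eq_or_ne j i with rfl | hj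
      · simp [unitV, hx]
      · simp [unitV, hj]
    have := hψ.1.monotone hle (σ0 i)
    rw [hσ0 i] at this
    apply bool_true_le
    simpa [unitV] using this
  -- claim B: weights are preserved
  have claimB : ∀ (k : ℕ) (x : Fin m → Bool), wt x = k → wt (ψ x) = k := by
    intro k
    induction k with
    | zero =>
      intro x hx
      have hxbot : x = ⊥ := by
        rw [wt, Finset.card_eq_zero, Finset.filter_eq_empty_iff] at hx
        funext j
        have := hx (Finset.mem_univ j)
        simp only [Bool.not_eq_true] at this
        exact this
      rw [hxbot, hψbot]
      simp [wt, bot_apply']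
    | succ k ihk =>
      intro x hx
      have hpos : (Finset.univ.filter fun i => x i = true).Nonempty := by
        rw [← Finset.card_pos, ← wt]; omega
      obtain ⟨i, hi⟩ := hpos
      simp only [Finset.mem_filter] at hi
      set y := Function.update x i false with hy
      have hylex : y ≤ x := by
        intro j
        rcases eq_or_ne j i with rfl | hj
        · simp [hy, Function.update_self]
        · simp [hy, Function.update_of_ne hj]
      have hdiffxy : (Finset.univ.filter fun j => y j ≠ x j) = {i} := by
        ext j
        simp only [Finset.mem_filter, Finset.mem_univ, true_and, Finset.mem_singleton]
        rcases eq_or_ne j i with rfl | hj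
        · simp [hy, Function.update_self, hi.2]
        · simp [hy, Function.update_of_ne hj, hj]
      have hwty : wt y = k := by
        have := wt_succ_of_dist_one hylex (by rw [hdiffxy, Finset.card_singleton])
        omega
      have hd : dCube y x = 1 := by
        rw [dCube_eq_one_iff]
        exact ⟨hylex, by rw [hdiffxy, Finset.card_singleton]⟩
      have hd2 := hψ.2 _ _ hd
      rw [dCube_eq_one_iff] at hd2
      have := wt_succ_of_dist_one hd2.1 hd2.2
      rw [ihk y hwty] at this
      omega
  -- combine
  refine ⟨σ, fun x j => ?_⟩
  have hsub : (Finset.univ.filter fun i => x i = true).image σ0 ⊆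
      (Finset.univ.filter fun j => ψ x j = true) := by
    intro j hj
    simp only [Finset.mem_image, Finset.mem_filter, Finset.mem_univ, true_and] at hj ⊢
    obtain ⟨i, hxi, rfl⟩ := hj
    exact claimA x i hxi
  have hcards : ((Finset.univ.filter fun i => x i = true).image σ0).card =
      (Finset.univ.filter fun j => ψ x j = true).card := by
    rw [Finset.card_image_of_injective _ hσ0inj]
    exact (claimB (wt x) x rfl).symm
  have hseteq := Finset.eq_of_subset_of_card_le hsub (le_of_eq hcards.symm)
  have hiff : ψ x j = true ↔ x (σ.symm j) = true := by
    constructor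
    · intro h
      have hjmem : j ∈ (Finset.univ.filter fun i => x i = true).image σ0 := by
        rw [hseteq]
        simp [h]
      simp only [Finset.mem_image, Finset.mem_filter, Finset.mem_univ, true_and] at hjmem
      obtain ⟨i, hxi, hji⟩ := hjmem
      have : σ.symm j = i := by
        apply σ.injective
        rw [σ.apply_symm_apply, hσapp, hji]
      rw [this]
      exact hxi
    · intro h
      have : σ0 (σ.symm j) = j := by
        rw [← hσapp, σ.apply_symm_apply]
      rw [← this]
      exact claimA x _ h
  cases hxv : x (σ.symm j) with
  | true => exact hiff.2 hxv
  | false =>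
    cases hψv : ψ x j with
    | false => rfl
    | true => rw [hiff.1 hψv] at hxv; exact absurd hxv (by simp)

lemma cotransverse_permComp {m : ℕ} (s : Equiv.Perm (Fin m)) :
    Cotransverse (fun x : Fin m → Bool => x ∘ s) := by
  constructor
  · intro x y hxy
    constructor
    · intro j
      exact hxy.le (s j)
    · intro hc
      apply absurd (le_antisymm hxy.le ?_) (ne_of_lt hxy)
      intro j
      have := hc (s.symm j)
      simpa using this
  · intro x y hxy
    rw [dCube_eq_one_iff] at hxy ⊢
    obtain ⟨hle, hcard⟩ := hxy
    refine ⟨fun j => hle (s j), ?_⟩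
    rw [← hcard]
    apply Finset.card_bij (fun i _ => s i)
    · intro a ha
      simp only [Finset.mem_filter, Finset.mem_univ, true_and] at ha ⊢
      exact ha
    · intro a ha b hb hab
      exact s.injective hab
    · intro b hb
      simp only [Finset.mem_filter, Finset.mem_univ, true_and] at hb ⊢
      exact ⟨s.symm b, by simpa using hb, by simp⟩


lemma cotransverse_symMap {n : ℕ} (i : Fin n) : Cotransverse (symMap i) :=
  cotransverse_permComp (Equiv.swap i.castSucc i.succ)

lemma fin2_strictMono {p : ℕ} {i j : Fin p} (hij : i < j) :
    StrictMono (fun k : Fin 2 => if k = 0 then i else j) := by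
  intro a b hab
  have h1 : a = 0 := Fin.ext (by
    have hb := b.isLt
    have hab' : (a : ℕ) < (b : ℕ) := hab
    simp only [Fin.val_zero]
    omega)
  have h2 : b = 1 := Fin.ext (by
    have hb := b.isLt
    have hab' : (a : ℕ) < (b : ℕ) := hab
    simp only [Fin.val_one]
    omega)
  rw [h1, h2]
  simpa using hij


/-- If `A` is a thick category -/
theorem stmt17 (A : ∀ m n : ℕ, CubeMap m n → Prop) (hA : ThickCubeCat A)
    (hNoSym : ∀ (n : ℕ) (i : Fin n), ¬ A (n + 1) (n + 1) (symMap i)) :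
    ∀ {m n : ℕ} (f : CubeMap m n), A m n f → InHatBox f := by
  intro m n f hf
  refine ⟨hA.cotransverse f hf, ?_⟩
  intro p δ hδ hinjc
  have hgA : A p n (f ∘ δ) := hA.comp δ f (hA.box_subset δ hδ) hf
  have hg : Cotransverse (f ∘ δ) := hA.cotransverse _ hgA
  obtain ⟨e, ψ, hemono, hψcot, hfact⟩ := cotransverse_factor (f ∘ δ) hg
  have hψA : A p p ψ :=
    hA.thick (f ∘ δ) ψ (insMap e ((f ∘ δ) ⊥)) hgA hψcot (isBox_insMap n p e _ hemono) hfact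
  have hψinj : Function.Injective ψ := by
    intro a b hab
    apply hinjc
    rw [hfact]
    show insMap e ((f ∘ δ) ⊥) (ψ a) = insMap e ((f ∘ δ) ⊥) (ψ b)
    rw [hab]
  obtain ⟨σ, hσ⟩ := cotransverse_inj_endo_perm ψ hψcot hψinj
  by_cases hσ1 : ∀ l, σ.symm l = l
  · have hψid : ψ = id := by
      funext x l
      rw [hσ x l, hσ1 l]
      rfl
    rw [hfact, hψid, Function.comp_id]
    exact isBox_insMap n p e _ hemono
  · -- σ has an inversion
    have hns : ¬ StrictMono (σ : Fin p → Fin p) := by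
      intro hsm
      have hid := strictMono_fin_endo_eq_id hsm
      apply hσ1
      intro l
      have h1 : σ (σ.symm l) = l := σ.apply_symm_apply l
      have h2 : σ (σ.symm l) = σ.symm l := congrFun hid (σ.symm l)
      exact h2.symm.trans h1
    rw [StrictMono] at hns
    push_neg at hns
    obtain ⟨i, j, hij, hnlt⟩ := hns
    have hgt : σ j < σ i :=
      lt_of_le_of_ne hnlt (fun h => absurd (σ.injective h) (ne_of_gt hij))
    set e₂ : Fin 2 → Fin p := fun k => if k = 0 then i else j with he₂def
    set e₂' : Fin 2 → Fin p := fun k => if k = 0 then σ j else σ i with he₂'def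
    have he₂ : StrictMono e₂ := fin2_strictMono hij
    have he₂' : StrictMono e₂' := fin2_strictMono hgt
    set δ₂ : CubeMap 2 p := insMap e₂ ⊥ with hδ₂def
    have hψδA : A 2 p (ψ ∘ δ₂) :=
      hA.comp δ₂ ψ (hA.box_subset δ₂ (isBox_insMap p 2 e₂ ⊥ he₂)) hψA
    have hswap0 : (Equiv.swap ((0 : Fin 1).castSucc) ((0 : Fin 1).succ)) 0 = 1 := by decide
    have hswap1 : (Equiv.swap ((0 : Fin 1).castSucc) ((0 : Fin 1).succ)) 1 = 0 := by decide
    have he₂0 : e₂ 0 = i := if_pos rfl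
    have he₂1 : e₂ 1 = j := if_neg (by decide)
    have he₂'0 : e₂' 0 = σ j := if_pos rfl
    have he₂'1 : e₂' 1 = σ i := if_neg (by decide)
    have hfact2 : (ψ ∘ δ₂) = insMap e₂' ⊥ ∘ symMap (0 : Fin 1) := by
      funext x l
      have hLHS : (ψ ∘ δ₂) x l = Function.extend e₂ x ⊥ (σ.symm l) := by
        show ψ (δ₂ x) l = _
        rw [hσ (δ₂ x) l]
        rfl
      have hRHS : (insMap e₂' ⊥ ∘ symMap (0 : Fin 1)) x l =
          Function.extend e₂' (symMap (0 : Fin 1) x) ⊥ l := rfl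
      rw [hLHS, hRHS]
      rcases eq_or_ne l (σ i) with rfl | hl1
      · rw [σ.symm_apply_apply, ← he₂'1, he₂'.injective.extend_apply, ← he₂0,
          he₂.injective.extend_apply]
        show x 0 = x ((Equiv.swap ((0 : Fin 1).castSucc) ((0 : Fin 1).succ)) 1)
        rw [hswap1]
      rcases eq_or_ne l (σ j) with rfl | hl2
      · rw [σ.symm_apply_apply, ← he₂'0, he₂'.injective.extend_apply, ← he₂1,
          he₂.injective.extend_apply]
        show x 1 = x ((Equiv.swap ((0 : Fin 1).castSucc) ((0 : Fin 1).succ)) 0)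
        rw [hswap0]
      · have hni : σ.symm l ≠ i := fun h => hl1 (by rw [← h, σ.apply_symm_apply])
        have hnj : σ.symm l ≠ j := fun h => hl2 (by rw [← h, σ.apply_symm_apply])
        have h1 : ¬ ∃ k, e₂ k = σ.symm l := by
          rw [Fin.exists_fin_two, he₂0, he₂1]
          push_neg
          exact ⟨fun h => hni h.symm, fun h => hnj h.symm⟩
        have h2 : ¬ ∃ k, e₂' k = l := by
          rw [Fin.exists_fin_two, he₂'0, he₂'1]
          push_neg
          exact ⟨fun h => hl2 h.symm, fun h => hl1 h.symm⟩
        rw [Function.extend_apply' _ _ _ h1, Function.extend_apply' _ _ _ h2]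
        rfl
    have hsymA : A 2 2 (symMap (0 : Fin 1)) :=
      hA.thick (ψ ∘ δ₂) (symMap (0 : Fin 1)) (insMap e₂' ⊥) hψδA
        (cotransverse_symMap 0) (isBox_insMap p 2 e₂' ⊥ he₂') hfact2
    exact absurd hsymA (hNoSym 1 0)
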